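/- arXiv:1507.07225 — 3 statements merged into one kernel-verified Lean document; each statement's English description precedes it below -/
import Mathlib

section
/- Let q ≥ 2 be an integer, 0 ≤ β ≤ 1, and d a positive integer with q > (1-β)d and d ≥ q-1. Then for any nonnegative reals x_2,...,x_q with x_2+...+x_q = d, one has 1/(1 + ∑_{i=2}^q β^{x_i}) ≤ 1/(q - (1-β)d), where β^0 is interpreted as 1 (including when β=0). -/
/-!
By convexity of `t ↦ β ^ t` (Jensen), `∑ i, β ^ x i ≥ n β ^ (d / n)` where `n = q - 1`, and since
`d / n ≥ 1`, Bernoulli's inequality gives `β ^ (d / n) ≥ 1 - (1 - β) d / n`. Hence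
`1 + ∑ i, β ^ x i ≥ q - (1 - β) d > 0`.
-/

open Finset

theorem ConvexOn.map_sum_div_card_le {ι : Type*} [Fintype ι] [Nonempty ι] {s : Set ℝ}
    {f : ℝ → ℝ} (hf : ConvexOn ℝ s f) {x : ι → ℝ} (hx : ∀ i, x i ∈ s) :
    f ((∑ i, x i) / Fintype.card ι) ≤ (∑ i, f (x i)) / Fintype.card ι := by
  have hn : (0 : ℝ) < Fintype.card ι := by exact_mod_cast Fintype.card_pos
  have h := hf.map_sum_le (t := univ) (w := fun _ => (Fintype.card ι : ℝ)⁻¹) (p := x)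
    (fun _ _ => by positivity) (by simp [card_univ, hn.ne']) (fun i _ => hx i)
  simpa only [smul_eq_mul, inv_mul_eq_div, ← sum_div] using h

theorem card_sub_mul_sum_le_sum_rpow {ι : Type*} [Fintype ι] {β : ℝ} (hβ : 0 ≤ β) {x : ι → ℝ}
    (hcard : (Fintype.card ι : ℝ) ≤ ∑ i, x i) :
    Fintype.card ι - (1 - β) * ∑ i, x i ≤ ∑ i, β ^ x i := by
  set n : ℝ := (Fintype.card ι : ℝ)
  set d : ℝ := ∑ i, x i
  rcases hβ.eq_or_lt with rfl | hβ
  · have : 0 ≤ ∑ i, (0 : ℝ) ^ x i := sum_nonneg fun i _ => Real.rpow_nonneg le_rfl _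
    linarith
  cases isEmpty_or_nonempty ι
  · simp [n, d]
  have hn : 0 < n := by simp only [n]; exact_mod_cast Fintype.card_pos
  have jensen : β ^ (d / n) ≤ (∑ i, β ^ x i) / n :=
    (convexOn_rpow_left hβ).map_sum_div_card_le fun _ => Set.mem_univ _
  have bernoulli : 1 + d / n * (β - 1) ≤ β ^ (d / n) := by
    simpa using one_add_mul_self_le_rpow_one_add (s := β - 1) (by linarith)
      ((one_le_div hn).2 hcard)
  calc n - (1 - β) * d = n * (1 + d / n * (β - 1)) := by field_simp; ring
    _ ≤ n * ((∑ i, β ^ x i) / n) := by gcongr; exact bernoulli.trans jensen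
    _ = ∑ i, β ^ x i := mul_div_cancel₀ _ hn.ne'

theorem potts_marginal_upper_high_degree_general (q : ℕ) (β : ℝ)
    (hβ0 : 0 ≤ β) (d : ℕ)
    (hqd : (q : ℝ) > (1 - β) * d) (hdq : q - 1 ≤ d)
    (x : Fin (q - 1) → ℝ) (hsum : ∑ i, x i = (d : ℝ)) :
    1 / (1 + ∑ i, β ^ (x i)) ≤ 1 / ((q : ℝ) - (1 - β) * d) := by
  have hcard : (Fintype.card (Fin (q - 1)) : ℝ) ≤ ∑ i, x i := by
    rw [Fintype.card_fin, hsum]; exact_mod_cast hdq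
  have hsum_rpow := card_sub_mul_sum_le_sum_rpow hβ0 hcard
  rw [Fintype.card_fin, hsum] at hsum_rpow
  have hq_cast : (q : ℝ) - 1 ≤ ((q - 1 : ℕ) : ℝ) := by
    rw [sub_le_iff_le_add]; exact_mod_cast (le_tsub_add : q ≤ q - 1 + 1)
  exact one_div_le_one_div_of_le (by linarith) (by linarith)

/-- Upper bound on the Potts marginal in the case `d ≥ q - 1`, with real exponents. -/
theorem potts_marginal_upper_high_degree (q : ℕ) (hq : 2 ≤ q) (β : ℝ)
    (hβ0 : 0 ≤ β) (hβ1 : β ≤ 1) (d : ℕ) (hd0 : 0 < d)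
    (hqd : (q : ℝ) > (1 - β) * d) (hdq : q - 1 ≤ d)
    (x : Fin (q - 1) → ℝ) (hx : ∀ i, 0 ≤ x i) (hsum : ∑ i, x i = (d : ℝ)) :
    1 / (1 + ∑ i, β ^ (x i)) ≤ 1 / ((q : ℝ) - (1 - β) * d) :=
  potts_marginal_upper_high_degree_general q β hβ0 d hqd hdq x hsum
end

section
/- Let q ≥ 2 be an integer, 0 ≤ β ≤ 1, and d a positive integer with d < q-1. Then for any nonnegative integers x_2,...,x_q with x_2+...+x_q = d, one has 1/(1 + ∑_{i=2}^q β^{x_i}) ≤ 1/(q - (1-β)d), where β^0 = 1. -/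
/-- Upper bound on the Potts marginal in the low-degree case `d < q - 1`,
with nonnegative integer exponents. -/
theorem potts_marginal_upper_low_degree (q : ℕ) (hq : 2 ≤ q) (β : ℝ)
    (hβ0 : 0 ≤ β) (hβ1 : β ≤ 1) (d : ℕ) (hd0 : 0 < d) (hdq : d < q - 1)
    (x : Fin (q - 1) → ℕ) (hsum : ∑ i, x i = d) :
    1 / (1 + ∑ i, β ^ (x i)) ≤ 1 / ((q : ℝ) - (1 - β) * d) := by
  have hdq' : (d : ℝ) < (q : ℝ) - 1 := by
    have h : d + 1 < q := by omega
    have : (d:ℝ) + 1 < q := by exact_mod_cast h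
    linarith
  have hpos : 0 < (q : ℝ) - (1 - β) * d := by
    nlinarith [mul_nonneg hβ0 (Nat.cast_nonneg d : (0:ℝ) ≤ d)]
  apply one_div_le_one_div_of_le hpos
  have key : ∀ i, 1 + (x i : ℝ) * (β - 1) ≤ β ^ (x i) := by
    intro i
    have h := one_add_mul_le_pow (a := β - 1) (by linarith) (x i)
    have : (1 + (β - 1)) = β := by ring
    rw [this] at h
    linarith
  calc (q : ℝ) - (1 - β) * d = 1 + ∑ i, (1 + (x i : ℝ) * (β - 1)) := by
        rw [Finset.sum_add_distrib, ← Finset.sum_mul]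
        have : ∑ i, (x i : ℝ) = (d : ℝ) := by rw [← hsum]; push_cast; ring
        rw [this]
        simp [Finset.card_fin]
        have hq1 : ((q - 1 : ℕ) : ℝ) = (q : ℝ) - 1 := by
          have : 1 ≤ q := by omega
          push_cast [this]; ring
        rw [hq1]; ring
    _ ≤ 1 + ∑ i, β ^ (x i) := by
        gcongr with i
        exact key i
end

section
/- Let Ω = (G, Λ, σ) be a feasible instance of proper q-coloring (a graph G, a set Λ of vertices with fixed colors σ, admitting at least one proper coloring extending σ). Let B ⊆ V \ Λ be a set of vertices such that every vertex of ∂B \ Λ has degree at most q-2 in G. If π ∈ [q]^B is a coloring of B such that σ ∪ π is a proper coloring of the induced subgraph G[Λ ∪ B], then there exists a proper q-coloring of all of G extending σ ∪ π. -/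
open scoped Classical in
/-- Greedy recoloring: process vertices in order of `e`; at stage `k+1`, recolor the
vertex of rank `k` if it lies in `S`, avoiding the current colors of earlier neighbors
and the `ext`-colors of later neighbors. -/
noncomputable def gstep {V : Type*} [Fintype V] [DecidableEq V] {q : ℕ}
    (G : SimpleGraph V) [DecidableRel G.Adj]
    (e : V ≃ Fin (Fintype.card V)) (S : Set V) (ext : V → Fin q) :
    ℕ → V → Fin q
  | 0 => ext
  | (k+1) => fun u =>
      if ((e u : ℕ) = k ∧ u ∈ S) then
        (if h : ∃ c : Fin q, c ∉ (G.neighborFinset u).image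
            (fun w => if (e w : ℕ) < (e u : ℕ) then gstep G e S ext k w else ext w)
         then h.choose else ext u)
      else gstep G e S ext k u

section
variable {V : Type*} [Fintype V] [DecidableEq V] {q : ℕ}
    (G : SimpleGraph V) [DecidableRel G.Adj]
    (e : V ≃ Fin (Fintype.card V)) (S : Set V) (ext : V → Fin q)

lemma gstep_notS {u : V} (hu : u ∉ S) : ∀ k, gstep G e S ext k u = ext u := by
  intro k
  induction k with
  | zero => rfl
  | succ k ih => simp [gstep, hu, ih]

lemma gstep_succ_ne {u : V} {k : ℕ} (h : (e u : ℕ) ≠ k) :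
    gstep G e S ext (k+1) u = gstep G e S ext k u := by
  simp [gstep, h]

lemma gstep_stable {u : V} {k : ℕ} (h1 : (e u : ℕ) < k) :
    ∀ m, k ≤ m → gstep G e S ext m u = gstep G e S ext k u := by
  intro m hm
  induction m with
  | zero => omega
  | succ m ih =>
    rcases Nat.lt_or_ge k (m+1) with h | h
    · have hne : (e u : ℕ) ≠ m := by omega
      rw [gstep_succ_ne G e S ext hne, ih (by omega)]
    · have : k = m + 1 := by omega
      rw [this]

lemma gstep_spec {u : V} (hu : u ∈ S) (hdeg : (G.neighborFinset u).card < q) :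
    gstep G e S ext ((e u : ℕ)+1) u ∉ (G.neighborFinset u).image
      (fun w => if (e w : ℕ) < (e u : ℕ) then gstep G e S ext (e u : ℕ) w else ext w) := by
  classical
  have hcard : ((G.neighborFinset u).image
      (fun w => if (e w : ℕ) < (e u : ℕ) then gstep G e S ext (e u : ℕ) w else ext w)).card < q := by
    calc _ ≤ (G.neighborFinset u).card := Finset.card_image_le
    _ < q := hdeg
  have hex : ∃ c : Fin q, c ∉ (G.neighborFinset u).image
      (fun w => if (e w : ℕ) < (e u : ℕ) then gstep G e S ext (e u : ℕ) w else ext w) := by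
    by_contra hc
    push_neg at hc
    have : ((G.neighborFinset u).image
        (fun w => if (e w : ℕ) < (e u : ℕ) then gstep G e S ext (e u : ℕ) w else ext w)) = Finset.univ :=
      Finset.eq_univ_iff_forall.mpr hc
    rw [this] at hcard
    simp at hcard
  have := hex.choose_spec
  have heq : gstep G e S ext ((e u : ℕ)+1) u = hex.choose := by
    simp only [gstep, hu, and_true, if_pos rfl]
    rw [dif_pos hex]
    simp
  rw [heq]
  exact this

end

/-- Local feasibility on a permissive block implies global feasibility for proper
`q`-colorings: a proper coloring of `G[Λ ∪ B]` extending the boundary condition can be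
extended to a proper coloring of all of `G`, provided every vertex of `∂B \ Λ` has degree
at most `q - 2`. -/
theorem permissive_block_feasibility {V : Type*} [Fintype V] [DecidableEq V]
    (G : SimpleGraph V) [DecidableRel G.Adj] (q : ℕ) (hq : 2 ≤ q)
    (Λ B : Set V) (hBΛ : B ∩ Λ = ∅)
    (σ : V → Fin q)
    (hfeas : ∃ τ : V → Fin q, (∀ u w, G.Adj u w → τ u ≠ τ w) ∧ ∀ u ∈ Λ, τ u = σ u)
    (hbd : ∀ u, u ∉ B → u ∉ Λ → (∃ w ∈ B, G.Adj u w) → G.degree u ≤ q - 2)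
    (ρ : V → Fin q) (hρΛ : ∀ u ∈ Λ, ρ u = σ u)
    (hlocal : ∀ u v, G.Adj u v → u ∈ Λ ∪ B → v ∈ Λ ∪ B → ρ u ≠ ρ v) :
    ∃ τ : V → Fin q, (∀ u w, G.Adj u w → τ u ≠ τ w) ∧ ∀ u ∈ Λ ∪ B, τ u = ρ u := by
  classical
  obtain ⟨τ₀, hτ₀, hτ₀Λ⟩ := hfeas
  set n := Fintype.card V with hn
  set e : V ≃ Fin n := Fintype.equivFin V with he
  -- buffer set
  set S : Set V := {u | u ∉ Λ ∪ B ∧ ∃ w ∈ B, G.Adj u w} with hS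
  -- the "pre"-coloring: ρ on Λ ∪ B, τ₀ elsewhere
  set ext : V → Fin q := fun u => if u ∈ Λ ∪ B then ρ u else τ₀ u with hext
  set τ : V → Fin q := gstep G e S ext n with hτ
  -- basic facts
  have hrank : ∀ u : V, (e u : ℕ) < n := fun u => (e u).2
  have hfix : ∀ u ∈ Λ ∪ B, τ u = ρ u := by
    intro u hu
    have huS : u ∉ S := fun h => h.1 hu
    rw [hτ, gstep_notS G e S ext huS, hext]
    simp [hu]
  have hnot : ∀ u, u ∉ Λ ∪ B → u ∉ S → τ u = τ₀ u := by
    intro u hu huS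
    rw [hτ, gstep_notS G e S ext huS, hext]
    simp [hu]
  -- value at a buffer vertex
  have hstab : ∀ (u : V) (k : ℕ), (e u : ℕ) < k → k ≤ n → τ u = gstep G e S ext k u := by
    intro u k h1 h2
    rw [hτ, gstep_stable G e S ext h1 n h2]
  have hdegS : ∀ u ∈ S, (G.neighborFinset u).card < q := by
    intro u hu
    have h1 : u ∉ B := fun h => hu.1 (Or.inr h)
    have h2 : u ∉ Λ := fun h => hu.1 (Or.inl h)
    have := hbd u h1 h2 hu.2
    rw [← SimpleGraph.card_neighborFinset_eq_degree] at this
    omega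
  -- main property at a buffer vertex: τ u differs from the relevant values of neighbors
  have hkey : ∀ u ∈ S, ∀ w, G.Adj u w →
      τ u ≠ (if (e w : ℕ) < (e u : ℕ) then τ w else ext w) := by
    intro u hu w hw
    have hspec := gstep_spec G e S ext hu (hdegS u hu)
    have hτu : τ u = gstep G e S ext ((e u : ℕ)+1) u :=
      hstab u ((e u : ℕ)+1) (by omega) (by have := hrank u; omega)
    intro hcontra
    apply hspec
    rw [← hτu]
    refine Finset.mem_image.mpr ⟨w, by simpa using hw, ?_⟩
    by_cases hlt : (e w : ℕ) < (e u : ℕ)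
    · rw [if_pos hlt] at hcontra ⊢
      rw [hcontra]
      exact (hstab w (e u : ℕ) hlt (by have := hrank u; omega)).symm
    · rw [if_neg hlt] at hcontra ⊢
      exact hcontra.symm
  refine ⟨τ, ?_, hfix⟩
  intro u w hw
  -- case analysis
  by_cases huS : u ∈ S
  · have := hkey u huS w hw
    by_cases hlt : (e w : ℕ) < (e u : ℕ)
    · rwa [if_pos hlt] at this
    · rw [if_neg hlt] at this
      by_cases hwS : w ∈ S
      · -- w is also a buffer vertex, with larger rank: use hkey for w
        have hne : u ≠ w := G.ne_of_adj hw
        have hlt' : (e u : ℕ) < (e w : ℕ) := by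
          have : e u ≠ e w := fun h => hne (e.injective h)
          have : (e u : ℕ) ≠ (e w : ℕ) := fun h => this (Fin.ext h)
          omega
        have := hkey w hwS u hw.symm
        rw [if_pos hlt'] at this
        exact fun h => this h.symm
      · by_cases hwΛB : w ∈ Λ ∪ B
        · rw [hfix w hwΛB]
          rw [hext] at this
          simpa [hwΛB] using this
        · rw [hnot w hwΛB hwS]
          rw [hext] at this
          simpa [hwΛB] using this
  · by_cases hwS : w ∈ S
    · -- symmetric: use hkey for w
      have := hkey w hwS u hw.symm
      by_cases hlt : (e u : ℕ) < (e w : ℕ)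
      · rw [if_pos hlt] at this
        exact fun h => this h.symm
      · rw [if_neg hlt, hext] at this
        by_cases huΛB : u ∈ Λ ∪ B
        · rw [hfix u huΛB]
          simp only [huΛB, if_pos] at this
          exact fun h => this h.symm
        · rw [hnot u huΛB huS]
          simp only [huΛB, if_neg] at this
          exact fun h => this h.symm
    · -- neither u nor w in S
      by_cases huΛB : u ∈ Λ ∪ B
      · by_cases hwΛB : w ∈ Λ ∪ B
        · rw [hfix u huΛB, hfix w hwΛB]
          exact hlocal u w hw huΛB hwΛB
        · -- w outside Λ ∪ B and not adjacent to B: u ∈ Λ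
          have huΛ : u ∈ Λ := by
            rcases huΛB with h | h
            · exact h
            · exact absurd ⟨u, h, hw.symm⟩ (fun hex => hwS ⟨hwΛB, hex⟩)
          rw [hfix u (Or.inl huΛ), hnot w hwΛB hwS, hρΛ u huΛ, ← hτ₀Λ u huΛ]
          exact hτ₀ u w hw
      · by_cases hwΛB : w ∈ Λ ∪ B
        · have hwΛ : w ∈ Λ := by
            rcases hwΛB with h | h
            · exact h
            · exact absurd ⟨w, h, hw⟩ (fun hex => huS ⟨huΛB, hex⟩)
          rw [hfix w (Or.inl hwΛ), hnot u huΛB huS, hρΛ w hwΛ, ← hτ₀Λ w hwΛ]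
          exact hτ₀ u w hw
        · rw [hnot u huΛB huS, hnot w hwΛB hwS]
          exact hτ₀ u w hw
end
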